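/- Let o be a 1-hop neighbor of the source s, i.e., dist(s,o) = 1. Then the representation of o after 1+δ iterations of the truncated Bellman–Ford with offset δ at minimum aggregates all walk representations of length between 1 and 1+δ: there exists c ∈ R with y⁽¹⁺ᵟ⁾(o) = (∑_{ℓ=1}^{1+δ} ∑_{p ∈ P_ℓ(s,o)} weight(p)) + c; equivalently, ∑_{ℓ=1}^{1+δ} ∑_{p ∈ P_ℓ(s,o)} weight(p) ≤ y⁽¹⁺ᵟ⁾(o) in the canonical order of R. -/

import Mathlib

open Finset

/-- The weight of a walk: the product of the edge weights `wt v_{i-1} v_i` along the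
walk, with the length-0 walk having weight 1. -/
def SimpleGraph.Walk.weight {V : Type*} {G : SimpleGraph V} {R : Type*} [CommSemiring R]
    (wt : V → V → R) {u v : V} (p : G.Walk u v) : R :=
  (p.darts.map fun d => wt d.fst d.snd).prod

/-- `pathSum G wt t s o = ∑_{p ∈ P_t(s,o)} weight(p)`, the sum of the weights of all
walks of length `t` from `s` to `o` in `G`. -/
def pathSum {V : Type*} [Fintype V] [DecidableEq V] (G : SimpleGraph V) [DecidableRel G.Adj]
    {R : Type*} [CommSemiring R] (wt : V → V → R) (t : ℕ) (s o : V) : R :=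
  ∑ p ∈ G.finsetWalkLength t s o, p.weight wt

open Classical in
/-- The truncated Bellman–Ford iterates `y_δ⁽ᵗ⁾` with source `s` and offset `δ`:
`y⁽⁰⁾(o) = 1` if `o = s` and `0` otherwise; for `t ≥ 1`, if `o` is reachable from `s`
and `dist(s,o) ≤ t ≤ dist(s,o) + δ` then `o` aggregates, over the constrained edge set
(neighbors `u` reachable from `s` with `dist(s,u) < dist(s,o) + δ`), the messages
`y⁽ᵗ⁻¹⁾(u) * wt u o`, plus `y⁽⁰⁾(o)`; otherwise `y⁽ᵗ⁾(o) = y⁽ᵗ⁻¹⁾(o)`. -/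
noncomputable def truncBF {V : Type*} [Fintype V] (G : SimpleGraph V)
    {R : Type*} [CommSemiring R] (wt : V → V → R) (s : V) (δ : ℕ) : ℕ → V → R
  | 0 => fun o => if o = s then 1 else 0
  | (t + 1) => fun o =>
      if G.Reachable s o ∧ G.dist s o ≤ t + 1 ∧ t + 1 ≤ G.dist s o + δ then
        (∑ u ∈ Finset.univ.filter
            (fun u => G.Adj u o ∧ G.Reachable s u ∧ G.dist s u < G.dist s o + δ),
          truncBF G wt s δ t u * wt u o) + (if o = s then 1 else 0)
      else truncBF G wt s δ t o

/-!
By induction on `t`, `y⁽ᵗ⁾(o)` dominates the total weight of walks from `s` to `o` of length at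
most `min t (dist(s,o) + δ)`. Splitting off the last edge `u → o` of such a walk leaves a
walk to `u` of length at most `t`; the neighbours `u` that the truncation drops are
unreachable or satisfy `dist(s,u) ≥ dist(s,o) + δ > t`, so they carry no such walk. For the
others `t ≤ dist(s,u) + δ` because `dist(s,o) ≤ dist(s,u) + 1`, so the induction hypothesis
applies to them. The theorem is the case `t = 1 + δ`, `dist(s,o) = 1`.
-/

open SimpleGraph

namespace SimpleGraph.Walk

variable {V : Type*} {G : SimpleGraph V} {R : Type*} [CommSemiring R] (wt : V → V → R)

@[simp]
lemma weight_nil {u : V} : (nil : G.Walk u u).weight wt = 1 := rfl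

@[simp]
lemma weight_cons {u v w : V} (h : G.Adj u v) (p : G.Walk v w) :
    (cons h p).weight wt = wt u v * p.weight wt := by
  simp [weight]

lemma weight_reverse {u v : V} (p : G.Walk u v) : p.reverse.weight wt = p.weight (flip wt) := by
  simp [weight, darts_reverse, List.map_reverse, List.prod_reverse, Function.comp_def, flip]

end SimpleGraph.Walk

section PathSum

variable {V : Type*} [Fintype V] [DecidableEq V] {G : SimpleGraph V} [DecidableRel G.Adj]
  {R : Type*} [CommSemiring R] (wt : V → V → R)

lemma pathSum_flip (n : ℕ) (s o : V) : pathSum G (flip wt) n o s = pathSum G wt n s o :=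
  Finset.sum_nbij' Walk.reverse Walk.reverse (by simp [mem_finsetWalkLength_iff])
    (by simp [mem_finsetWalkLength_iff]) (by simp) (by simp)
    fun p _ => (Walk.weight_reverse wt p).symm

lemma pathSum_zero (s o : V) : pathSum G wt 0 s o = if o = s then 1 else 0 := by
  by_cases h : s = o
  · subst h; simp [pathSum, finsetWalkLength]
  · simp [pathSum, finsetWalkLength, h, Ne.symm h]

lemma pathSum_eq_zero {n : ℕ} {s o : V} (h : ¬(G.Reachable s o ∧ G.dist s o ≤ n)) :
    pathSum G wt n s o = 0 :=
  Finset.sum_eq_zero fun p hp =>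
    absurd ⟨p.reachable, (mem_finsetWalkLength_iff.mp hp) ▸ G.dist_le p⟩ h

lemma pathSum_succ_left (n : ℕ) (u v : V) :
    pathSum G wt (n + 1) u v = ∑ w ∈ univ.filter (G.Adj u ·), wt u w * pathSum G wt n w v := by
  rw [pathSum, finsetWalkLength, Finset.sum_biUnion]
  · trans ∑ w : G.neighborSet u, wt u w * pathSum G wt n w v
    · refine Finset.sum_congr rfl fun w _ => ?_
      rw [Finset.sum_map, pathSum, Finset.mul_sum]
      exact Finset.sum_congr rfl fun p _ => Walk.weight_cons wt w.2 p
    · exact (Finset.sum_subtype _ (by simp) (fun w => wt u w * pathSum G wt n w v)).symm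
  · rintro w - w' - hne
    simp only [Function.onFun, Finset.disjoint_left, Finset.mem_map]
    rintro _ ⟨p, -, rfl⟩ ⟨q, -, hq⟩
    exact hne (Subtype.ext (Walk.cons.inj hq).1.symm)

lemma pathSum_succ (n : ℕ) (s o : V) :
    pathSum G wt (n + 1) s o = ∑ u ∈ univ.filter (G.Adj · o), pathSum G wt n s u * wt u o := by
  rw [← pathSum_flip, pathSum_succ_left]
  refine Finset.sum_congr (by ext; simp [G.adj_comm]) fun u _ => ?_
  rw [pathSum_flip, mul_comm]; rfl

lemma pathSum_succ_eq_sum_of_subset {n : ℕ} {s o : V} (F : Finset V) (hF : ∀ u ∈ F, G.Adj u o)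
    (hzero : ∀ u, G.Adj u o → u ∉ F → pathSum G wt n s u = 0) :
    pathSum G wt (n + 1) s o = ∑ u ∈ F, pathSum G wt n s u * wt u o := by
  rw [pathSum_succ]
  refine (Finset.sum_subset (fun u hu => by simpa using hF u hu) fun u hu huF => ?_).symm
  rw [hzero u (by simpa using hu) huF, zero_mul]

end PathSum

section TruncBF

variable {V : Type*} [Fintype V] [DecidableEq V] {G : SimpleGraph V}
  {R : Type*} [CommSemiring R] (wt : V → V → R) (s : V) (δ : ℕ)

lemma truncBF_zero (o : V) : truncBF G wt s δ 0 o = if o = s then 1 else 0 := by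
  simp only [truncBF]; congr

variable [DecidableRel G.Adj]

lemma truncBF_succ (t : ℕ) (o : V) :
    truncBF G wt s δ (t + 1) o =
      if G.Reachable s o ∧ G.dist s o ≤ t + 1 ∧ t + 1 ≤ G.dist s o + δ then
        (∑ u ∈ univ.filter (fun u => G.Adj u o ∧ G.Reachable s u ∧ G.dist s u < G.dist s o + δ),
          truncBF G wt s δ t u * wt u o) + (if o = s then 1 else 0)
      else truncBF G wt s δ t o := by
  simp only [truncBF]; congr

variable [PartialOrder R] [CanonicallyOrderedAdd R]

theorem sum_range_pathSum_le_truncBF (t : ℕ) (o : V) :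
    ∑ ℓ ∈ range (min t (G.dist s o + δ) + 1), pathSum G wt ℓ s o ≤ truncBF G wt s δ t o := by
  induction t generalizing o with
  | zero => simp [truncBF_zero, pathSum_zero]
  | succ t ih =>
    by_cases hC : G.Reachable s o ∧ G.dist s o ≤ t + 1 ∧ t + 1 ≤ G.dist s o + δ
    · rw [truncBF_succ, if_pos hC, min_eq_left hC.2.2, Finset.sum_range_succ', pathSum_zero]
      refine add_le_add ?_ le_rfl
      set F := univ.filter (fun u => G.Adj u o ∧ G.Reachable s u ∧ G.dist s u < G.dist s o + δ)
      have hF : ∀ u ∈ F, G.Adj u o := fun u hu => (Finset.mem_filter.1 hu).2.1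
      calc ∑ ℓ ∈ range (t + 1), pathSum G wt (ℓ + 1) s o
          = ∑ ℓ ∈ range (t + 1), ∑ u ∈ F, pathSum G wt ℓ s u * wt u o := by
            refine Finset.sum_congr rfl fun ℓ hℓ => pathSum_succ_eq_sum_of_subset wt F hF
              fun u hadj huF => pathSum_eq_zero wt fun ⟨hr, hd⟩ => huF ?_
            simp only [F, Finset.mem_filter, Finset.mem_univ, true_and, Finset.mem_range] at hℓ ⊢
            exact ⟨hadj, hr, by omega⟩
        _ = ∑ u ∈ F, (∑ ℓ ∈ range (t + 1), pathSum G wt ℓ s u) * wt u o := by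
            rw [Finset.sum_comm]; simp only [Finset.sum_mul]
        _ ≤ ∑ u ∈ F, truncBF G wt s δ t u * wt u o := by
            refine Finset.sum_le_sum fun u hu => mul_le_mul_left ?_ _
            have hdist : G.dist s o ≤ G.dist s u + 1 :=
              (dist_eq_one_iff_adj.2 (hF u hu)) ▸ (hF u hu).reachable.dist_triangle_right s
            simpa [min_eq_left (by omega : t ≤ G.dist s u + δ)] using ih u
    · rw [truncBF_succ, if_neg hC]
      rcases le_or_gt (t + 1) (G.dist s o + δ) with h | h
      · rw [min_eq_left h, Finset.sum_range_succ,
          pathSum_eq_zero wt fun h' => hC ⟨h'.1, h'.2, h⟩, add_zero]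
        simpa [min_eq_left (by omega : t ≤ G.dist s o + δ)] using ih o
      · simpa [min_eq_right h.le, min_eq_right (by omega : G.dist s o + δ ≤ t)] using ih o

end TruncBF

theorem truncBF_one_hop_ge_pathSum_general {V : Type*} [Fintype V] [DecidableEq V]
    (G : SimpleGraph V) [DecidableRel G.Adj] {R : Type*} [CommSemiring R] [PartialOrder R]
    [CanonicallyOrderedAdd R]
    (wt : V → V → R) (s : V) (δ : ℕ) (o : V) (hdist : G.dist s o = 1) :
    ∑ ℓ ∈ Finset.Icc 1 (1 + δ), pathSum G wt ℓ s o ≤ truncBF G wt s δ (1 + δ) o :=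
  calc ∑ ℓ ∈ Icc 1 (1 + δ), pathSum G wt ℓ s o
      ≤ ∑ ℓ ∈ range (min (1 + δ) (G.dist s o + δ) + 1), pathSum G wt ℓ s o :=
        Finset.sum_le_sum_of_subset fun ℓ => by simp [hdist]
    _ ≤ truncBF G wt s δ (1 + δ) o := sum_range_pathSum_le_truncBF wt s δ _ o

/-- Let `o` be a 1-hop neighbor of the source `s`, i.e. `dist(s,o) = 1`.
Then the representation of `o` after `1 + δ` iterations of the truncated Bellman–Ford
with offset `δ` at minimum aggregates all walk representations of length between `1`
and `1 + δ`: `∑_{ℓ=1}^{1+δ} ∑_{p ∈ P_ℓ(s,o)} weight(p) ≤ y⁽¹⁺ᵟ⁾(o)` in the canonical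
order of `R`. -/
theorem truncBF_one_hop_ge_pathSum {V : Type*} [Fintype V] [DecidableEq V]
    (G : SimpleGraph V) [DecidableRel G.Adj] {R : Type*} [CommSemiring R] [PartialOrder R]
    [CanonicallyOrderedAdd R] [NoZeroDivisors R]
    (wt : V → V → R) (s : V) (δ : ℕ) (o : V) (hdist : G.dist s o = 1) :
    ∑ ℓ ∈ Finset.Icc 1 (1 + δ), pathSum G wt ℓ s o ≤ truncBF G wt s δ (1 + δ) o :=
  truncBF_one_hop_ge_pathSum_general G wt s δ o hdist
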